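/- arXiv:2107.05069 — 3 statements merged into one kernel-verified Lean document; each statement's English description precedes it below -/
import Mathlib

section
/- If a logic ⊢ has a τ-algebraic semantics, then for every equation ε ≈ δ in τ and every formula φ(v, z⃗), the rules x, φ(ε, z⃗) ⊢ φ(δ, z⃗) and x, φ(δ, z⃗) ⊢ φ(ε, z⃗) are valid in ⊢. -/
/-- An algebraic signature: a type of operation symbols with arities. -/
structure Sig : Type 1 where
  Op : Type
  ar : Op → ℕ

/-- Formulas (terms) over a signature, with variables indexed by ℕ. -/
inductive Fm (L : Sig) : Type where
  | var : ℕ → Fm L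
  | op : (f : L.Op) → (Fin (L.ar f) → Fm L) → Fm L

/-- An algebra for the signature `L`. -/
structure Alg (L : Sig) : Type 1 where
  carrier : Type
  interp : (f : L.Op) → (Fin (L.ar f) → carrier) → carrier

/-- Evaluation of a formula in an algebra under a valuation of the variables. -/
def Fm.eval {L : Sig} (A : Alg L) (v : ℕ → A.carrier) : Fm L → A.carrier
  | .var n => v n
  | .op f as => A.interp f (fun i => (as i).eval A v)

/-- Substitution (endomorphism of the formula algebra). -/
def Fm.subst {L : Sig} (σ : ℕ → Fm L) : Fm L → Fm L
  | .var n => σ n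
  | .op f as => .op f (fun i => (as i).subst σ)

/-- The set of variables occurring in a formula. -/
def Fm.vars {L : Sig} : Fm L → Set ℕ
  | .var n => {n}
  | .op _ as => ⋃ i, (as i).vars

/-- Substitute the formula `ψ` for the variable `v` in `φ`. -/
def Fm.subst1 {L : Sig} (v : ℕ) (ψ : Fm L) (φ : Fm L) : Fm L :=
  φ.subst (fun n => if n = v then ψ else .var n)

/-- A logic: a substitution-invariant (finitary or not) consequence relation on formulas. -/
structure Logic (L : Sig) : Type where
  deriv : Set (Fm L) → Fm L → Prop
  axm : ∀ Γ φ, φ ∈ Γ → deriv Γ φ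
  mono : ∀ Γ Δ φ, Γ ⊆ Δ → deriv Γ φ → deriv Δ φ
  cut : ∀ Γ Δ φ, deriv Γ φ → (∀ γ ∈ Γ, deriv Δ γ) → deriv Δ φ
  substInv : ∀ (σ : ℕ → Fm L) Γ φ, deriv Γ φ → deriv (Fm.subst σ '' Γ) (φ.subst σ)

/-- A logical matrix: an algebra with a set of designated elements. -/
structure LMatrix (L : Sig) : Type 1 where
  alg : Alg L
  F : Set alg.carrier

/-- The consequence relation induced by a class of matrices. -/
def inducedBy {L : Sig} (M : Set (LMatrix L)) (Γ : Set (Fm L)) (φ : Fm L) : Prop :=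
  ∀ m ∈ M, ∀ v : ℕ → m.alg.carrier,
    (∀ γ ∈ Γ, γ.eval m.alg v ∈ m.F) → φ.eval m.alg v ∈ m.F

/-- `M` is a matrix semantics for the logic `ℒ`. -/
def IsMatrixSemantics {L : Sig} (ℒ : Logic L) (M : Set (LMatrix L)) : Prop :=
  ∀ Γ φ, ℒ.deriv Γ φ ↔ inducedBy M Γ φ

/-- Equational consequence relative to a class of algebras (equations as pairs of formulas). -/
def eqConseq {L : Sig} (K : Set (Alg L)) (Θ : Set (Fm L × Fm L)) (e : Fm L × Fm L) : Prop :=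
  ∀ A ∈ K, ∀ v : ℕ → A.carrier,
    (∀ p ∈ Θ, p.1.eval A v = p.2.eval A v) → e.1.eval A v = e.2.eval A v

/-- `τ(φ)`: the result of substituting `φ` for the variable `x` (= variable 0) in each
equation of `τ`. -/
def tauApp {L : Sig} (τ : Set (Fm L × Fm L)) (φ : Fm L) : Set (Fm L × Fm L) :=
  (fun e => (Fm.subst1 0 φ e.1, Fm.subst1 0 φ e.2)) '' τ

/-- `τ[Γ]`. -/
def tauAppSet {L : Sig} (τ : Set (Fm L × Fm L)) (Γ : Set (Fm L)) : Set (Fm L × Fm L) :=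
  ⋃ γ ∈ Γ, tauApp τ γ

/-- `τ` is a set of equations in the single variable `x` (= variable 0). -/
def IsUnivalent {L : Sig} (τ : Set (Fm L × Fm L)) : Prop :=
  ∀ e ∈ τ, e.1.vars ⊆ ({0} : Set ℕ) ∧ e.2.vars ⊆ ({0} : Set ℕ)

/-- `K` is a `τ`-algebraic semantics for `ℒ`: `Γ ⊢ φ` iff `τ[Γ] ⊨_K τ(φ)`. -/
def IsTauAlgSem {L : Sig} (ℒ : Logic L) (τ : Set (Fm L × Fm L)) (K : Set (Alg L)) : Prop :=
  IsUnivalent τ ∧ ∀ Γ φ, ℒ.deriv Γ φ ↔ ∀ e ∈ tauApp τ φ, eqConseq K (tauAppSet τ Γ) e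

/-- `ℒ` has an algebraic semantics (admits an equational completeness theorem). -/
def HasAlgSem {L : Sig} (ℒ : Logic L) : Prop :=
  ∃ (τ : Set (Fm L × Fm L)) (K : Set (Alg L)), IsTauAlgSem ℒ τ K

/-- `θ` is a congruence of the algebra `A`. -/
def IsCong {L : Sig} (A : Alg L) (θ : A.carrier → A.carrier → Prop) : Prop :=
  Equivalence θ ∧ ∀ (f : L.Op) (as bs : Fin (L.ar f) → A.carrier),
    (∀ i, θ (as i) (bs i)) → θ (A.interp f as) (A.interp f bs)

/-- The congruence of `A` generated by `X` (least congruence containing `X`). -/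
def congGen {L : Sig} (A : Alg L) (X : Set (A.carrier × A.carrier))
    (a c : A.carrier) : Prop :=
  ∀ θ, IsCong A θ → (∀ p ∈ X, θ p.1 p.2) → θ a c

/-- `p` is a unary polynomial function of `A`: `p(a) = φ^A(a, c⃗)` for a formula `φ(x, y⃗)`
and parameters `c⃗` from `A`. -/
def IsUnaryPoly {L : Sig} (A : Alg L) (p : A.carrier → A.carrier) : Prop :=
  ∃ (φ : Fm L) (c : ℕ → A.carrier),
    ∀ a, p a = φ.eval A (fun n => if n = 0 then a else c n)

/-- Compatibility of a relation with a set. -/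
def Compatible {L : Sig} (A : Alg L) (θ : A.carrier → A.carrier → Prop)
    (F : Set A.carrier) : Prop :=
  ∀ a c, θ a c → a ∈ F → c ∈ F

/-- The Leibniz congruence `Ω^A F`: the largest congruence of `A` compatible with `F`
(realized as the union of all congruences compatible with `F`). -/
def leibniz {L : Sig} (A : Alg L) (F : Set A.carrier) (a c : A.carrier) : Prop :=
  ∃ θ, IsCong A θ ∧ Compatible A θ F ∧ θ a c

/-- The formula algebra. -/
def FmAlg (L : Sig) : Alg L :=
  ⟨Fm L, fun f as => Fm.op f as⟩

/-- `ℒ` has no theorems. -/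
def LacksTheorems {L : Sig} (ℒ : Logic L) : Prop :=
  ¬ ∃ φ, ℒ.deriv ∅ φ

/-- `ℒ` is assertional. -/
def Assertional {L : Sig} (ℒ : Logic L) : Prop :=
  ∃ (M : Set (LMatrix L)) (φ : Fm L), IsMatrixSemantics ℒ M ∧ φ.vars ⊆ ({0} : Set ℕ) ∧
    ∀ m ∈ M, ∃ c : m.alg.carrier,
      (∀ a : m.alg.carrier, φ.eval m.alg (fun _ => a) = c) ∧ m.F = {c}

/-- `ℒ` is almost assertional. -/
def AlmostAssertional {L : Sig} (ℒ : Logic L) : Prop :=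
  LacksTheorems ℒ ∧
  ∃ (M : Set (LMatrix L)) (φ : Fm L), IsMatrixSemantics ℒ M ∧ φ.vars ⊆ ({0} : Set ℕ) ∧
    ∀ m ∈ M, m.F.Nonempty → ∃ c : m.alg.carrier,
      (∀ a : m.alg.carrier, φ.eval m.alg (fun _ => a) = c) ∧ m.F = {c}

/-- Two formulas are logically equivalent in `ℒ`. -/
def LogEquiv {L : Sig} (ℒ : Logic L) (ε δ : Fm L) : Prop :=
  ∀ (φ : Fm L) (v : ℕ),
    ℒ.deriv {Fm.subst1 v ε φ} (Fm.subst1 v δ φ) ∧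
    ℒ.deriv {Fm.subst1 v δ φ} (Fm.subst1 v ε φ)

/-!
Write `x` for variable `0`. Substituting `x` for `x` in `ε ≈ δ ∈ τ` gives back `ε ≈ δ`, so
`τ(x) ⊨_K ε ≈ δ`; hence in any model of `τ[{x, φ(ε)}]` the formulas `φ(ε)` and `φ(δ)` take the
same value, and since `τ(ψ)` depends on `ψ` only through its value, `τ(φ(δ))` holds there because
`τ(φ(ε))` does. Completeness of the `τ`-algebraic semantics turns this into
`x, φ(ε) ⊢ φ(δ)`.
-/

namespace Fm

variable {L : Sig}

theorem eval_subst (A : Alg L) (w : ℕ → A.carrier) (σ : ℕ → Fm L) (φ : Fm L) :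
    (φ.subst σ).eval A w = φ.eval A (fun n => (σ n).eval A w) := by
  induction φ with
  | var n => rfl
  | op f as ih => simp only [subst, eval, ih]

theorem eval_subst1 (A : Alg L) (w : ℕ → A.carrier) (v : ℕ) (ψ φ : Fm L) :
    (subst1 v ψ φ).eval A w = φ.eval A (Function.update w v (ψ.eval A w)) := by
  rw [subst1, eval_subst]
  congr 1
  funext n
  by_cases hn : n = v
  · simp [hn]
  · simp [hn, eval]

theorem subst1_var_self (v : ℕ) (φ : Fm L) : subst1 v (var v) φ = φ := by
  induction φ with
  | var n => by_cases hn : n = v <;> simp [subst1, subst, hn]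
  | op f as ih => simp only [subst1] at ih ⊢; simp only [subst, ih]

end Fm

section TauAlgSem

variable {L : Sig} {τ : Set (Fm L × Fm L)} {K : Set (Alg L)}

theorem eqConseq.swap {Θ : Set (Fm L × Fm L)} {e : Fm L × Fm L} (h : eqConseq K Θ e) :
    eqConseq K Θ e.swap :=
  fun A hA w hw => (h A hA w hw).symm

theorem eqConseq_tauApp_var_zero {e : Fm L × Fm L} (he : e ∈ τ) :
    eqConseq K (tauApp τ (Fm.var 0)) e := by
  intro A _ w hw
  simpa only [Fm.subst1_var_self] using hw _ ⟨e, he, rfl⟩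

theorem tauApp_subset_tauAppSet {Γ : Set (Fm L)} {γ : Fm L} (hγ : γ ∈ Γ) :
    tauApp τ γ ⊆ tauAppSet τ Γ :=
  Set.subset_biUnion_of_mem hγ

theorem tauApp_holds_of_eval_eq {A : Alg L} {w : ℕ → A.carrier} {φ ψ : Fm L}
    (hφψ : φ.eval A w = ψ.eval A w)
    (hφ : ∀ p ∈ tauApp τ φ, p.1.eval A w = p.2.eval A w) :
    ∀ p ∈ tauApp τ ψ, p.1.eval A w = p.2.eval A w := by
  rintro _ ⟨e, he, rfl⟩
  simpa only [Fm.eval_subst1, hφψ] using hφ _ ⟨e, he, rfl⟩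

theorem IsTauAlgSem.deriv_subst1_of_eqConseq {ℒ : Logic L} (hsem : IsTauAlgSem ℒ τ K)
    {ε δ : Fm L} (hεδ : eqConseq K (tauApp τ (Fm.var 0)) (ε, δ)) (φ : Fm L) (v : ℕ) :
    ℒ.deriv {Fm.var 0, Fm.subst1 v ε φ} (Fm.subst1 v δ φ) := by
  rw [hsem.2]
  intro p hp A hA w hw
  have hx : ε.eval A w = δ.eval A w := hεδ A hA w fun q hq =>
    hw q (tauApp_subset_tauAppSet (Set.mem_insert _ _) hq)
  have hφε : ∀ q ∈ tauApp τ (Fm.subst1 v ε φ), q.1.eval A w = q.2.eval A w :=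
    fun q hq =>
      hw q (tauApp_subset_tauAppSet (Set.mem_insert_of_mem _ (Set.mem_singleton _)) hq)
  refine tauApp_holds_of_eval_eq ?_ hφε p hp
  simp only [Fm.eval_subst1, hx]

end TauAlgSem

/-- If `ℒ` has a `τ`-algebraic semantics, then `x, φ(ε, z⃗) ⊣⊢ φ(δ, z⃗), x` for all
`ε ≈ δ ∈ τ` and all formulas `φ(v, z⃗)`. -/
theorem tau_alg_sem_congruence_rules {L : Sig} (ℒ : Logic L)
    (τ : Set (Fm L × Fm L)) (hK : ∃ K : Set (Alg L), IsTauAlgSem ℒ τ K) :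
    ∀ e ∈ τ, ∀ (φ : Fm L) (v : ℕ),
      ℒ.deriv {Fm.var 0, Fm.subst1 v e.1 φ} (Fm.subst1 v e.2 φ) ∧
      ℒ.deriv {Fm.var 0, Fm.subst1 v e.2 φ} (Fm.subst1 v e.1 φ) := by
  obtain ⟨K, hsem⟩ := hK
  intro e he φ v
  have hτ : eqConseq K (tauApp τ (Fm.var 0)) e := eqConseq_tauApp_var_zero he
  exact ⟨hsem.deriv_subst1_of_eqConseq hτ φ v, hsem.deriv_subst1_of_eqConseq hτ.swap φ v⟩
end

section
/- The property of having an algebraic semantics persists in extensions: if a logic ⊢ has an algebraic semantics and ⊢' is a logic in the same language with ⊢ ⊆ ⊢', then ⊢' has an algebraic semantics. -/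
/-! Take for the new class all algebras in which the `τ`-translation of every rule of `ℒ'` is
valid; soundness is then immediate. For completeness, the `ℒ'`-theory `Δ` of `Γ` is also an
`ℒ`-theory, so `ℒ'`-derivability from `Γ` is captured by `τ[Δ] ⊨_K`. The relation
`τ[Δ] ⊨_K p ≈ q` is a congruence of the formula algebra, and in the quotient, under the valuation
induced by a substitution `σ`, `τ(χ)` holds exactly when `Γ ⊢' σ χ`. Substitution invariance of
`ℒ'` puts the quotient in the new class, and the canonical valuation refutes every `φ` with
`Γ ⊬' φ`. -/

namespace Fm

variable {L : Sig}

theorem subst_subst (σ σ' : ℕ → Fm L) :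
    ∀ χ : Fm L, (χ.subst σ).subst σ' = χ.subst (fun n => (σ n).subst σ')
  | .var _ => rfl
  | .op f as => congrArg (op f) (funext fun i => subst_subst σ σ' (as i))

theorem subst_var : ∀ χ : Fm L, χ.subst var = χ
  | .var _ => rfl
  | .op f as => congrArg (op f) (funext fun i => subst_var (as i))

theorem subst_congr {σ σ' : ℕ → Fm L} :
    ∀ χ : Fm L, (∀ n ∈ χ.vars, σ n = σ' n) → χ.subst σ = χ.subst σ'
  | .var n, h => h n rfl
  | .op f as, h => congrArg (op f) (funext fun i =>
      subst_congr (as i) fun n hn => h n (Set.mem_iUnion.2 ⟨i, hn⟩))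

theorem subst1_zero_subst {ε : Fm L} (hε : ε.vars ⊆ {0}) (χ : Fm L) (σ : ℕ → Fm L) :
    (subst1 0 χ ε).subst σ = subst1 0 (χ.subst σ) ε := by
  rw [subst1, subst1, subst_subst]
  refine subst_congr ε fun n hn => ?_
  obtain rfl : n = 0 := hε hn
  simp only [if_pos]

theorem eval_fmAlg (σ : ℕ → Fm L) : ∀ χ : Fm L, χ.eval (FmAlg L) σ = χ.subst σ
  | .var _ => rfl
  | .op f as => congrArg (op f) (funext fun i => eval_fmAlg σ (as i))

end Fm

section Quotient

variable {L : Sig}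

/-- The quotient algebra `A / θ`; its operations are well defined when `θ` is a congruence. -/
noncomputable abbrev Alg.quot (A : Alg L) (θ : A.carrier → A.carrier → Prop) : Alg L :=
  ⟨Quot θ, fun f qs => Quot.mk θ (A.interp f fun i => (qs i).out)⟩

theorem Fm.eval_quot {A : Alg L} {θ : A.carrier → A.carrier → Prop} (hθ : IsCong A θ)
    (v : ℕ → A.carrier) :
    ∀ χ : Fm L, χ.eval (A.quot θ) (fun n => Quot.mk θ (v n)) = Quot.mk θ (χ.eval A v)
  | .var _ => rfl
  | .op f as => by
    refine Quot.sound (hθ.2 f _ _ fun i => ?_)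
    dsimp only
    rw [Fm.eval_quot hθ v (as i), ← hθ.1.quot_mk_eq_iff, Quot.out_eq]

def relCong (K : Set (Alg L)) (Θ : Set (Fm L × Fm L)) (p q : Fm L) : Prop :=
  eqConseq K Θ (p, q)

theorem isCong_relCong (K : Set (Alg L)) (Θ : Set (Fm L × Fm L)) :
    IsCong (FmAlg L) (relCong K Θ) :=
  ⟨⟨fun _ _ _ _ _ => rfl,
    fun h A hA v hv => (h A hA v hv).symm,
    fun h₁ h₂ A hA v hv => (h₁ A hA v hv).trans (h₂ A hA v hv)⟩,
   fun f _ _ h A hA v hv => congrArg (A.interp f) (funext fun i => h i A hA v hv)⟩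

end Quotient

section TauSemantics

variable {L : Sig} {τ : Set (Fm L × Fm L)}

theorem tauApp_subst (hτ : IsUnivalent τ) (χ : Fm L) (σ : ℕ → Fm L) :
    tauApp τ (χ.subst σ) = (fun e => (e.1.subst σ, e.2.subst σ)) '' tauApp τ χ := by
  rw [tauApp, tauApp, Set.image_image]
  refine Set.image_congr fun e he => ?_
  rw [Fm.subst1_zero_subst (hτ e he).1, Fm.subst1_zero_subst (hτ e he).2]

theorem forall_mem_tauAppSet {Γ : Set (Fm L)} {P : Fm L × Fm L → Prop} :
    (∀ e ∈ tauAppSet τ Γ, P e) ↔ ∀ γ ∈ Γ, ∀ e ∈ tauApp τ γ, P e := by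
  simp only [tauAppSet, Set.mem_iUnion₂]
  grind

def tauModels (ℒ : Logic L) (τ : Set (Fm L × Fm L)) : Set (Alg L) :=
  {A | ∀ Δ ψ, ℒ.deriv Δ ψ → ∀ e ∈ tauApp τ ψ, eqConseq {A} (tauAppSet τ Δ) e}

variable {ℒ ℒ' : Logic L} {K : Set (Alg L)}

/-- The `ℒ'`-theory of `Γ` is closed under `ℒ` because `ℒ ⊆ ℒ'`. -/
theorem deriv_iff_eqConseq_theory (hsem : IsTauAlgSem ℒ τ K)
    (hext : ∀ Γ φ, ℒ.deriv Γ φ → ℒ'.deriv Γ φ) (Γ : Set (Fm L)) (χ : Fm L) :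
    ℒ'.deriv Γ χ ↔ ∀ e ∈ tauApp τ χ, eqConseq K (tauAppSet τ {ψ | ℒ'.deriv Γ ψ}) e := by
  rw [← hsem.2]
  constructor
  · exact ℒ.axm _ χ
  · exact fun h => ℒ'.cut _ Γ χ (hext _ _ h) fun _ hγ => hγ

noncomputable def lindenbaumAlg (ℒ' : Logic L) (τ : Set (Fm L × Fm L)) (K : Set (Alg L))
    (Γ : Set (Fm L)) : Alg L :=
  (FmAlg L).quot (relCong K (tauAppSet τ {ψ | ℒ'.deriv Γ ψ}))

theorem lindenbaumAlg_tauApp_iff (hsem : IsTauAlgSem ℒ τ K)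
    (hext : ∀ Γ φ, ℒ.deriv Γ φ → ℒ'.deriv Γ φ) (Γ : Set (Fm L)) (σ : ℕ → Fm L) (χ : Fm L) :
    (∀ e ∈ tauApp τ χ, e.1.eval (lindenbaumAlg ℒ' τ K Γ) (fun n => Quot.mk _ (σ n)) =
        e.2.eval (lindenbaumAlg ℒ' τ K Γ) (fun n => Quot.mk _ (σ n))) ↔
      ℒ'.deriv Γ (χ.subst σ) := by
  have hθ := isCong_relCong K (tauAppSet τ {ψ | ℒ'.deriv Γ ψ})
  have heval : ∀ ψ : Fm L, ψ.eval (lindenbaumAlg ℒ' τ K Γ) (fun n => Quot.mk _ (σ n)) =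
      Quot.mk _ (ψ.subst σ) := fun ψ =>
    (Fm.eval_quot hθ σ ψ).trans (congrArg _ (Fm.eval_fmAlg σ ψ))
  simp only [heval]
  rw [deriv_iff_eqConseq_theory hsem hext, tauApp_subst hsem.1, Set.forall_mem_image]
  exact forall₂_congr fun _ _ => hθ.1.quot_mk_eq_iff _ _

theorem lindenbaumAlg_mem_tauModels (hsem : IsTauAlgSem ℒ τ K)
    (hext : ∀ Γ φ, ℒ.deriv Γ φ → ℒ'.deriv Γ φ) (Γ : Set (Fm L)) :
    lindenbaumAlg ℒ' τ K Γ ∈ tauModels ℒ' τ := by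
  rintro Δ ψ hψ e he _ rfl v hv
  obtain ⟨σ, rfl⟩ : ∃ σ : ℕ → Fm L, (fun n => Quot.mk _ (σ n)) = v :=
    ⟨fun n => (v n).out, funext fun n => Quot.out_eq (v n)⟩
  have hΔ : ∀ δ ∈ Δ, ℒ'.deriv Γ (δ.subst σ) := fun δ hδ =>
    (lindenbaumAlg_tauApp_iff hsem hext Γ σ δ).1 (forall_mem_tauAppSet.1 hv δ hδ)
  have hψσ : ℒ'.deriv Γ (ψ.subst σ) :=
    ℒ'.cut _ Γ _ (ℒ'.substInv σ Δ ψ hψ) (Set.forall_mem_image.2 hΔ)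
  exact (lindenbaumAlg_tauApp_iff hsem hext Γ σ ψ).2 hψσ e he

theorem IsTauAlgSem.of_extension (hsem : IsTauAlgSem ℒ τ K)
    (hext : ∀ Γ φ, ℒ.deriv Γ φ → ℒ'.deriv Γ φ) :
    IsTauAlgSem ℒ' τ (tauModels ℒ' τ) := by
  refine ⟨hsem.1, fun Γ φ => ⟨fun h e he A hA => hA Γ φ h e he A rfl, fun h => ?_⟩⟩
  have hΓ : ∀ e ∈ tauAppSet τ Γ, e.1.eval (lindenbaumAlg ℒ' τ K Γ) (fun n => Quot.mk _ (.var n)) =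
      e.2.eval (lindenbaumAlg ℒ' τ K Γ) (fun n => Quot.mk _ (.var n)) :=
    forall_mem_tauAppSet.2 fun γ hγ => (lindenbaumAlg_tauApp_iff hsem hext Γ Fm.var γ).2 <| by
      rw [Fm.subst_var]
      exact ℒ'.axm Γ γ hγ
  have hφ := (lindenbaumAlg_tauApp_iff hsem hext Γ Fm.var φ).1 fun e he =>
    h e he _ (lindenbaumAlg_mem_tauModels hsem hext Γ) _ hΓ
  rwa [Fm.subst_var] at hφ

end TauSemantics

/-- Having an algebraic semantics persists in extensions. -/
theorem hasAlgSem_of_extension {L : Sig} (ℒ ℒ' : Logic L)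
    (h : HasAlgSem ℒ) (hext : ∀ Γ φ, ℒ.deriv Γ φ → ℒ'.deriv Γ φ) :
    HasAlgSem ℒ' :=
  let ⟨τ, _, hsem⟩ := h
  ⟨τ, tauModels ℒ' τ, hsem.of_extension hext⟩
end

section
/- If a logic ⊢ lacks theorems and M is a matrix semantics for ⊢, then the class N = { ⟨A,F⟩ ∈ M : F ≠ ∅ } ∪ { ⟨Fm, ∅⟩ } is also a matrix semantics for ⊢, where Fm is the formula algebra. -/
/-! A matrix with no designated elements validates every inference with a nonempty set of
premises, and under any valuation refutes every inference without premises. Hence for `Γ ≠ ∅`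
removing or adding such matrices does not change the induced consequence, while for `Γ = ∅`
neither `ℒ` (which lacks theorems) nor `⟨Fm, ∅⟩` validates anything. -/

section InducedBy

variable {L : Sig} {M N : Set (LMatrix L)} {Γ : Set (Fm L)} {φ : Fm L}

theorem inducedBy_anti (hMN : M ⊆ N) (h : inducedBy N Γ φ) : inducedBy M Γ φ :=
  fun m hm => h m (hMN hm)

theorem inducedBy_union :
    inducedBy (M ∪ N) Γ φ ↔ inducedBy M Γ φ ∧ inducedBy N Γ φ :=
  ⟨fun h => ⟨inducedBy_anti Set.subset_union_left h, inducedBy_anti Set.subset_union_right h⟩,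
    fun ⟨hM, hN⟩ m hm => hm.elim (hM m) (hN m)⟩

theorem inducedBy_of_nonempty_of_forall_F_eq_empty (hΓ : Γ.Nonempty)
    (hM : ∀ m ∈ M, m.F = ∅) : inducedBy M Γ φ := by
  obtain ⟨γ, hγ⟩ := hΓ
  intro m hm v hv
  simpa [hM m hm] using hv γ hγ

theorem inducedBy_sep_F_nonempty_iff (hΓ : Γ.Nonempty) :
    inducedBy {m ∈ M | m.F.Nonempty} Γ φ ↔ inducedBy M Γ φ := by
  obtain ⟨γ, hγ⟩ := hΓ
  refine ⟨fun h m hm v hv => h m ⟨hm, _, hv γ hγ⟩ v hv, inducedBy_anti (Set.sep_subset _ _)⟩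

theorem not_inducedBy_empty_of_mem {m : LMatrix L} (hm : m ∈ M) (hF : m.F = ∅)
    (v : ℕ → m.alg.carrier) (φ : Fm L) : ¬ inducedBy M ∅ φ := fun h => by
  simpa [hF] using h m hm v (fun _ => False.elim)

end InducedBy

/-- If `ℒ` lacks theorems and `M` is a matrix semantics for `ℒ`, then so is
`N = { ⟨A, F⟩ ∈ M : F ≠ ∅ } ∪ { ⟨Fm, ∅⟩ }`. -/
theorem matrix_semantics_no_theorems {L : Sig} (ℒ : Logic L) (M : Set (LMatrix L))
    (hthm : LacksTheorems ℒ) (hsem : IsMatrixSemantics ℒ M) :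
    IsMatrixSemantics ℒ
      ({m ∈ M | m.F.Nonempty} ∪ {LMatrix.mk (FmAlg L) ∅}) := by
  intro Γ φ
  rcases Γ.eq_empty_or_nonempty with rfl | hΓ
  · have hFm : ¬ inducedBy {LMatrix.mk (FmAlg L) ∅} ∅ φ :=
      not_inducedBy_empty_of_mem (Set.mem_singleton _) rfl Fm.var φ
    rw [inducedBy_union]
    exact iff_of_false (fun h => hthm ⟨φ, h⟩) fun h => hFm h.2
  · have hFm : inducedBy {LMatrix.mk (FmAlg L) ∅} Γ φ :=
      inducedBy_of_nonempty_of_forall_F_eq_empty hΓ fun _ hm => hm ▸ rfl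
    rw [hsem, inducedBy_union, inducedBy_sep_F_nonempty_iff hΓ, and_iff_left hFm]
end
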